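/- Any instance of a rule in the rule set S† all of whose formulas (antecedents and consequent) lie in the fragment S is an instance of a rule of the rule set S, and conversely: any instance of a rule in S is an instance of a rule of S†. -/
import Mathlib


/-!
Syllogistic logics (Pratt-Hartmann & Moss, "Logics for the Relational Syllogistic").

Unary atoms and binary atoms are encoded by `ℕ` (two disjoint copies).
-/

namespace Syllogistic

/-- Unary literals: a unary atom `p` or its negation `p̄`. -/
inductive Lit : Type
  | pos : ℕ → Lit
  | neg : ℕ → Lit
deriving DecidableEq

/-- Binary literals: a binary atom `r` or its negation `r̄`. -/
inductive BLit : Type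
  | pos : ℕ → BLit
  | neg : ℕ → BLit
deriving DecidableEq

/-- Bar (negation) on unary literals. -/
def Lit.bar : Lit → Lit
  | .pos p => .neg p
  | .neg p => .pos p

/-- Bar (negation) on binary literals. -/
def BLit.bar : BLit → BLit
  | .pos r => .neg r
  | .neg r => .pos r

/-- A unary literal is positive if it is an atom. -/
def Lit.isPos : Lit → Prop
  | .pos _ => True
  | .neg _ => False

/-- A binary literal is positive if it is an atom. -/
def BLit.isPos : BLit → Prop
  | .pos _ => True
  | .neg _ => False

/-- e-terms: a unary literal `l`, or `∃(l,t)`, or `∀(l,t)`. -/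
inductive ETerm : Type
  | lit : Lit → ETerm
  | ex : Lit → BLit → ETerm
  | al : Lit → BLit → ETerm
deriving DecidableEq

/-- The e-term consisting of a single positive unary atom. -/
def atomE (p : ℕ) : ETerm := .lit (.pos p)

/-- Bar on e-terms: `∀(l,t)‾ = ∃(l,t̄)` and `∃(l,t)‾ = ∀(l,t̄)`. -/
def ETerm.bar : ETerm → ETerm
  | .lit l => .lit l.bar
  | .ex l t => .al l t.bar
  | .al l t => .ex l t.bar

/-- c-terms: a unary literal, or `∃(p,t)`/`∀(p,t)` with `p` a unary atom. -/
def ETerm.isC : ETerm → Prop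
  | .lit _ => True
  | .ex l _ => l.isPos
  | .al l _ => l.isPos

/-- Positive c-terms: the literals occurring in them are positive. -/
def ETerm.isPosC : ETerm → Prop
  | .lit l => l.isPos
  | .ex l t => l.isPos ∧ t.isPos
  | .al l t => l.isPos ∧ t.isPos

/-- R*†-formulas: `∃(e,f)` or `∀(e,f)` for e-terms `e`, `f`. -/
inductive Formula : Type
  | ex : ETerm → ETerm → Formula
  | al : ETerm → ETerm → Formula
deriving DecidableEq

/-- Negation of a formula: `∀(e,f)‾ = ∃(e,f̄)`, `∃(e,f)‾ = ∀(e,f̄)`. -/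
def Formula.bar : Formula → Formula
  | .ex e f => .al e f.bar
  | .al e f => .ex e f.bar

/-- The silent identification: `∃(e,f)` with `∃(f,e)`, and `∀(e,f)` with `∀(f̄,ē)`. -/
def Formula.swap : Formula → Formula
  | .ex e f => .ex f e
  | .al e f => .al f.bar e.bar

/-- Two formulas are identified if they are equal or are swaps of each other. -/
def FormEquiv (φ ψ : Formula) : Prop := ψ = φ ∨ ψ = φ.swap

/-- An absurdity is a formula of the form `∃(e,ē)`. -/
def IsAbsurd (φ : Formula) : Prop := ∃ e : ETerm, φ = .ex e e.bar

/-- A substitution maps unary atoms to unary atoms and binary atoms to binary atoms. -/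
structure Subst where
  u : ℕ → ℕ
  b : ℕ → ℕ

def Lit.subst (g : Subst) : Lit → Lit
  | .pos p => .pos (g.u p)
  | .neg p => .neg (g.u p)

def BLit.subst (g : Subst) : BLit → BLit
  | .pos r => .pos (g.b r)
  | .neg r => .neg (g.b r)

def ETerm.subst (g : Subst) : ETerm → ETerm
  | .lit l => .lit (l.subst g)
  | .ex l t => .ex (l.subst g) (t.subst g)
  | .al l t => .al (l.subst g) (t.subst g)

/-- Atom-wise application of a substitution to a formula. -/
def Formula.subst (g : Subst) : Formula → Formula
  | .ex e f => .ex (e.subst g) (f.subst g)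
  | .al e f => .al (e.subst g) (f.subst g)

/-- A structure over a domain `A`: an interpretation of every unary atom as a
subset of `A` and of every binary atom as a binary relation on `A`.
(Non-emptiness of the domain is imposed where structures are quantified over.) -/
structure Interp (A : Type) where
  up : ℕ → Set A
  br : ℕ → Set (A × A)

def Interp.litI {A : Type} (M : Interp A) : Lit → Set A
  | .pos p => M.up p
  | .neg p => (M.up p)ᶜ

def Interp.blitI {A : Type} (M : Interp A) : BLit → Set (A × A)
  | .pos r => M.br r
  | .neg r => (M.br r)ᶜ

/-- Interpretation of e-terms. -/
def Interp.etermI {A : Type} (M : Interp A) : ETerm → Set A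
  | .lit l => M.litI l
  | .ex l t => {a | ∃ b ∈ M.litI l, (a, b) ∈ M.blitI t}
  | .al l t => {a | ∀ b ∈ M.litI l, (a, b) ∈ M.blitI t}

/-- Truth of a formula in a structure. -/
def Interp.Sat {A : Type} (M : Interp A) : Formula → Prop
  | .al e f => M.etermI e ⊆ M.etermI f
  | .ex e f => (M.etermI e ∩ M.etermI f).Nonempty

/-- Truth of a set of formulas in a structure. -/
def Interp.SatSet {A : Type} (M : Interp A) (Θ : Set Formula) : Prop :=
  ∀ θ ∈ Θ, M.Sat θ

/-- `Θ ⊨ θ`: every structure (with non-empty domain) satisfying `Θ` satisfies `θ`. -/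
def Entails (Θ : Set Formula) (θ : Formula) : Prop :=
  ∀ (A : Type), Nonempty A → ∀ M : Interp A, M.SatSet Θ → M.Sat θ

/-- `Θ` is satisfied in some structure with non-empty domain. -/
def Satisfiable (Θ : Set Formula) : Prop :=
  ∃ (A : Type), Nonempty A ∧ ∃ M : Interp A, M.SatSet Θ

/-- A syllogistic rule: a finite set of antecedents together with a consequent. -/
structure SylRule where
  ants : Finset Formula
  con : Formula

/-- A rule is sound if its antecedents entail its consequent. -/
def SylRule.Sound (R : SylRule) : Prop := Entails (↑R.ants) R.con

/-- A rule is a rule *in* the fragment `F` if all its formulas lie in `F`. -/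
def RuleIn (F : Set Formula) (R : SylRule) : Prop :=
  (∀ ψ ∈ R.ants, ψ ∈ F) ∧ R.con ∈ F

/-- The instance of a rule under a substitution. -/
def SylRule.inst (g : Subst) (R : SylRule) : SylRule :=
  ⟨R.ants.image (Formula.subst g), R.con.subst g⟩

/-- Two rules are the same modulo the identification of formulas. -/
def RuleEquiv (R R' : SylRule) : Prop :=
  (∀ ψ ∈ R.ants, ∃ ψ' ∈ R'.ants, FormEquiv ψ ψ') ∧
  (∀ ψ' ∈ R'.ants, ∃ ψ ∈ R.ants, FormEquiv ψ ψ') ∧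
  FormEquiv R.con R'.con

/-- The direct derivation relation `⊢_X` determined by a set `X` of syllogistic
rules: premises may be used, and instances of rules applied; formulas are
treated up to the silent identification. -/
inductive Derives (X : Set SylRule) : Set Formula → Formula → Prop
  | mem {Θ : Set Formula} {θ : Formula} : θ ∈ Θ → Derives X Θ θ
  | rule {Θ : Set Formula} (R : SylRule) (g : Subst) :
      R ∈ X → (∀ ψ ∈ R.ants, Derives X Θ (ψ.subst g)) →
      Derives X Θ (R.con.subst g)
  | ident {Θ : Set Formula} {φ ψ : Formula} :
      Derives X Θ φ → FormEquiv φ ψ → Derives X Θ ψ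

/-- The indirect derivation relation `⊩_X`: as `⊢_X`, together with
*reductio ad absurdum*. -/
inductive IDerives (X : Set SylRule) : Set Formula → Formula → Prop
  | mem {Θ : Set Formula} {θ : Formula} : θ ∈ Θ → IDerives X Θ θ
  | rule {Θ : Set Formula} (R : SylRule) (g : Subst) :
      R ∈ X → (∀ ψ ∈ R.ants, IDerives X Θ (ψ.subst g)) →
      IDerives X Θ (R.con.subst g)
  | ident {Θ : Set Formula} {φ ψ : Formula} :
      IDerives X Θ φ → FormEquiv φ ψ → IDerives X Θ ψ
  | raa {Θ : Set Formula} {θ b : Formula} :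
      IsAbsurd b → IDerives X (Θ ∪ {θ.bar}) b → IDerives X Θ θ

/-- Soundness of a derivation relation for the fragment `F`. -/
def SoundFor (F : Set Formula) (D : Set Formula → Formula → Prop) : Prop :=
  ∀ (Θ : Set Formula) (θ : Formula), Θ ⊆ F → θ ∈ F → D Θ θ → Entails Θ θ

/-- Completeness of a derivation relation for the fragment `F`. -/
def CompleteFor (F : Set Formula) (D : Set Formula → Formula → Prop) : Prop :=
  ∀ (Θ : Set Formula) (θ : Formula), Θ ⊆ F → θ ∈ F → Entails Θ θ → D Θ θ

/-- Refutation-completeness for the fragment `F`: every unsatisfiable set of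
`F`-formulas derives some absurdity. -/
def RefutationCompleteFor (F : Set Formula) (D : Set Formula → Formula → Prop) : Prop :=
  ∀ Θ : Set Formula, Θ ⊆ F → ¬ Satisfiable Θ → ∃ b, IsAbsurd b ∧ D Θ b

/-- Consistency of a set of formulas with respect to `⊩_X`. -/
def Consistent (X : Set SylRule) (Θ : Set Formula) : Prop :=
  ¬ ∃ b, IsAbsurd b ∧ IDerives X Θ b

/-! ### The six fragments -/

/-- The fragment `S`: `∃(p,l)`, `∃(l,p)`, `∀(p,l)`, `∀(l,p̄)`. -/
def FragS : Set Formula :=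
  {φ | (∃ (p : ℕ) (l : Lit), φ = .ex (atomE p) (.lit l)) ∨
       (∃ (p : ℕ) (l : Lit), φ = .ex (.lit l) (atomE p)) ∨
       (∃ (p : ℕ) (l : Lit), φ = .al (atomE p) (.lit l)) ∨
       (∃ (p : ℕ) (l : Lit), φ = .al (.lit l) (.lit (.neg p)))}

/-- The fragment `S†`: `∃(l,m)`, `∀(l,m)` for unary literals `l`, `m`. -/
def FragSdag : Set Formula :=
  {φ | ∃ l m : Lit, φ = .ex (.lit l) (.lit m) ∨ φ = .al (.lit l) (.lit m)}

/-- The fragment `R`: `∃(p,c)`, `∃(c,p)`, `∀(p,c)`, `∀(c,p̄)` for a c-term `c`. -/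
def FragR : Set Formula :=
  {φ | ∃ (p : ℕ) (c : ETerm), c.isC ∧
       (φ = .ex (atomE p) c ∨ φ = .ex c (atomE p) ∨
        φ = .al (atomE p) c ∨ φ = .al c (.lit (.neg p)))}

/-- The fragment `R†`: `∃(l,e)`, `∃(e,l)`, `∀(l,e)`, `∀(e,l)` for an e-term `e`. -/
def FragRdag : Set Formula :=
  {φ | ∃ (l : Lit) (e : ETerm),
       φ = .ex (.lit l) e ∨ φ = .ex e (.lit l) ∨
       φ = .al (.lit l) e ∨ φ = .al e (.lit l)}

/-- The fragment `R*`: `∃(c⁺,d)`, `∃(d,c⁺)`, `∀(c⁺,d)`, `∀(d,c⁺‾)` with `c⁺` a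
positive c-term and `d` a c-term. -/
def FragRstar : Set Formula :=
  {φ | ∃ c d : ETerm, c.isPosC ∧ d.isC ∧
       (φ = .ex c d ∨ φ = .ex d c ∨ φ = .al c d ∨ φ = .al d c.bar)}

/-- The fragment `R*†`: all formulas. -/
def FragRstardag : Set Formula := Set.univ

/-- The six syllogistic fragments. -/
def IsFragment (F : Set Formula) : Prop :=
  F = FragS ∨ F = FragSdag ∨ F = FragR ∨ F = FragRdag ∨ F = FragRstar ∨ F = FragRstardag

/-! ### Rule sets -/

/-- The rule set `S`: (D1), (D2), (D3), (B), (A), (T), (I), (X). -/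
def RuleSetS : Set SylRule :=
  {R | (∃ (p q : ℕ) (l : Lit),
          R = ⟨{.al (atomE q) (.lit l), .ex (atomE p) (atomE q)}, .ex (atomE p) (.lit l)⟩) ∨
       (∃ (p q : ℕ) (l : Lit),
          R = ⟨{.ex (atomE p) (.lit l), .al (atomE p) (atomE q)}, .ex (atomE q) (.lit l)⟩) ∨
       (∃ (p q : ℕ) (l : Lit),
          R = ⟨{.al (atomE q) (.lit l.bar), .ex (atomE p) (.lit l)}, .ex (atomE p) (.lit (.neg q))⟩) ∨
       (∃ (p q : ℕ) (l : Lit),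
          R = ⟨{.al (atomE p) (atomE q), .al (atomE q) (.lit l)}, .al (atomE p) (.lit l)⟩) ∨
       (∃ (p : ℕ) (l : Lit),
          R = ⟨{.al (atomE p) (.lit (.neg p))}, .al (atomE p) (.lit l)⟩) ∨
       (∃ p : ℕ, R = ⟨∅, .al (atomE p) (atomE p)⟩) ∨
       (∃ (p : ℕ) (l : Lit),
          R = ⟨{.ex (atomE p) (.lit l)}, .ex (atomE p) (atomE p)⟩) ∨
       (∃ φ ψ : Formula, φ ∈ FragS ∧ ψ ∈ FragS ∧ R = ⟨{ψ, ψ.bar}, φ⟩)}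

/-- The rule set `S†`: (D), (B), (A), (T), (I), (N), (X). -/
def RuleSetSdag : Set SylRule :=
  {R | (∃ l m n : Lit,
          R = ⟨{.ex (.lit l) (.lit n), .al (.lit l) (.lit m)}, .ex (.lit m) (.lit n)⟩) ∨
       (∃ l m n : Lit,
          R = ⟨{.al (.lit l) (.lit m), .al (.lit m) (.lit n)}, .al (.lit l) (.lit n)⟩) ∨
       (∃ l m : Lit, R = ⟨{.al (.lit l) (.lit l.bar)}, .al (.lit l) (.lit m)⟩) ∨
       (∃ l : Lit, R = ⟨∅, .al (.lit l) (.lit l)⟩) ∨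
       (∃ l m : Lit, R = ⟨{.ex (.lit l) (.lit m)}, .ex (.lit l) (.lit l)⟩) ∨
       (∃ l : Lit, R = ⟨{.al (.lit l.bar) (.lit l)}, .ex (.lit l) (.lit l)⟩) ∨
       (∃ φ ψ : Formula, φ ∈ FragSdag ∧ ψ ∈ FragSdag ∧ R = ⟨{ψ, ψ.bar}, φ⟩)}

/-- The rules (B), (T) and (A) of the rule set `S†`. -/
def RuleSetBTA : Set SylRule :=
  {R | (∃ l m n : Lit,
          R = ⟨{.al (.lit l) (.lit m), .al (.lit m) (.lit n)}, .al (.lit l) (.lit n)⟩) ∨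
       (∃ l : Lit, R = ⟨∅, .al (.lit l) (.lit l)⟩) ∨
       (∃ l m : Lit, R = ⟨{.al (.lit l) (.lit l.bar)}, .al (.lit l) (.lit m)⟩)}

/-- The rule set `R`: (D1), (D2), (D3), (B), (T), (I), (A), (II), (∀∀), (∃∃), (∀∃). -/
def RuleSetR : Set SylRule :=
  {R | (∃ (p q : ℕ) (c : ETerm), c.isC ∧
          R = ⟨{.ex (atomE p) (atomE q), .al (atomE q) c}, .ex (atomE p) c⟩) ∨
       (∃ (p q : ℕ) (c : ETerm), c.isC ∧
          R = ⟨{.al (atomE p) (atomE q), .ex (atomE p) c}, .ex (atomE q) c⟩) ∨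
       (∃ (p q : ℕ) (c : ETerm), c.isC ∧
          R = ⟨{.al (atomE q) c.bar, .ex (atomE p) c}, .ex (atomE p) (.lit (.neg q))⟩) ∨
       (∃ (p q : ℕ) (c : ETerm), c.isC ∧
          R = ⟨{.al (atomE p) (atomE q), .al (atomE q) c}, .al (atomE p) c⟩) ∨
       (∃ p : ℕ, R = ⟨∅, .al (atomE p) (atomE p)⟩) ∨
       (∃ (p : ℕ) (c : ETerm), c.isC ∧
          R = ⟨{.ex (atomE p) c}, .ex (atomE p) (atomE p)⟩) ∨
       (∃ (p : ℕ) (c : ETerm), c.isC ∧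
          R = ⟨{.al (atomE p) (.lit (.neg p))}, .al (atomE p) c⟩) ∨
       (∃ (p q : ℕ) (t : BLit),
          R = ⟨{.ex (atomE p) (.ex (.pos q) t)}, .ex (atomE q) (atomE q)⟩) ∨
       (∃ (p q q' : ℕ) (t : BLit),
          R = ⟨{.al (atomE p) (.al (.pos q') t), .ex (atomE q) (atomE q')},
               .al (atomE p) (.ex (.pos q) t)⟩) ∨
       (∃ (p q q' : ℕ) (t : BLit),
          R = ⟨{.ex (atomE p) (.ex (.pos q) t), .al (atomE q) (atomE q')},
               .ex (atomE p) (.ex (.pos q') t)⟩) ∨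
       (∃ (p q q' : ℕ) (t : BLit),
          R = ⟨{.al (atomE p) (.ex (.pos q) t), .al (atomE q) (atomE q')},
               .al (atomE p) (.ex (.pos q') t)⟩)}

/-- The rule set `R*`: (T), (I), (B), (D1), (D2), (J), (K), (L), (II), (Z), (W). -/
def RuleSetRstar : Set SylRule :=
  {R | (∃ c : ETerm, c.isPosC ∧ R = ⟨∅, .al c c⟩) ∨
       (∃ c d : ETerm, c.isPosC ∧ d.isC ∧ R = ⟨{.ex c d}, .ex c c⟩) ∨
       (∃ b c d : ETerm, b.isPosC ∧ c.isPosC ∧ d.isC ∧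
          R = ⟨{.al b c, .al c d}, .al b d⟩) ∨
       (∃ b c d : ETerm, b.isPosC ∧ c.isPosC ∧ d.isC ∧
          R = ⟨{.ex b c, .al c d}, .ex b d⟩) ∨
       (∃ b c d : ETerm, b.isPosC ∧ c.isPosC ∧ d.isC ∧
          R = ⟨{.al b c, .ex b d}, .ex c d⟩) ∨
       (∃ p q r : ℕ,
          R = ⟨{.al (atomE p) (atomE q)},
               .al (.al (.pos q) (.pos r)) (.al (.pos p) (.pos r))⟩) ∨
       (∃ p q r : ℕ,
          R = ⟨{.al (atomE p) (atomE q)},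
               .al (.ex (.pos p) (.pos r)) (.ex (.pos q) (.pos r))⟩) ∨
       (∃ p q r : ℕ,
          R = ⟨{.ex (atomE p) (atomE q)},
               .al (.al (.pos p) (.pos r)) (.ex (.pos q) (.pos r))⟩) ∨
       (∃ p q r : ℕ,
          R = ⟨{.ex (atomE q) (.ex (.pos p) (.pos r))}, .ex (atomE p) (atomE p)⟩) ∨
       (∃ (p r : ℕ) (c : ETerm), c.isPosC ∧
          R = ⟨{.al (atomE p) (.lit (.neg p))}, .al c (.al (.pos p) (.pos r))⟩) ∨
       (∃ p r : ℕ,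
          R = ⟨{.al (atomE p) (.lit (.neg p))},
               .ex (.al (.pos p) (.pos r)) (.al (.pos p) (.pos r))⟩)}

/-! ### Auxiliary notions for particular statements -/

/-- Universal S†-formulas. -/
def IsUnivSdag (φ : Formula) : Prop := ∃ l m : Lit, φ = .al (.lit l) (.lit m)

/-- Existential S†-formulas. -/
def IsExSdag (φ : Formula) : Prop := ∃ l m : Lit, φ = .ex (.lit l) (.lit m)

/-- The closure `V^Φ` of a set of unary literals: all `m` with
`Φ ⊢_BTA ∀(l,m)` for some `l ∈ V`. -/
def litClosure (Φ : Set Formula) (V : Set Lit) : Set Lit :=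
  {m | ∃ l ∈ V, Derives RuleSetBTA Φ (.al (.lit l) (.lit m))}

/-- Membership in a set of formulas, modulo the silent identification. -/
def MemMod (Γ : Set Formula) (φ : Formula) : Prop := ∃ ψ ∈ Γ, FormEquiv φ ψ

/-- The reachability relation `c ⇒ d` determined by `Γ`. -/
def Reach (Γ : Set Formula) (c d : ETerm) : Prop :=
  c = d ∨ ∃ (k : ℕ) (p : ℕ → ℕ), c = atomE (p 0) ∧
    MemMod Γ (.al (atomE (p k)) d) ∧
    ∀ i < k, MemMod Γ (.al (atomE (p i)) (atomE (p (i + 1))))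

/-- `V ⇒ d` for a set `V` of c-terms. -/
def ReachSet (Γ : Set Formula) (V : Set ETerm) (d : ETerm) : Prop :=
  ∃ c ∈ V, Reach Γ c d

/-- The witness sets `B_k`; the formal object `b_{V,i}` is encoded as the
pair `(V, i)`. -/
def BSet (Γ : Set Formula) : ℕ → Set (Set ETerm × ℕ)
  | 0 => {x | ∃ (p : ℕ) (c : ETerm), c.isC ∧ MemMod Γ (.ex (atomE p) c) ∧
            x = ({atomE p, c}, 0)}
  | k + 1 => BSet Γ k ∪
      {x | ∃ (p i : ℕ), (i = 1 ∨ i = 2) ∧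
        (∃ y ∈ BSet Γ k, ∃ t : BLit, ReachSet Γ y.1 (.ex (.pos p) t)) ∧
        x = ({atomE p}, i)}

/-- The witness set `B = ⋃_k B_k`. -/
def BAll (Γ : Set Formula) : Set (Set ETerm × ℕ) := ⋃ k, BSet Γ k

/-- Condition (C). -/
def CondC (Γ : Set Formula) : Prop :=
  ∃ (V : Set ETerm) (i : ℕ) (W : Set ETerm) (j : ℕ),
    (V, i) ∈ BAll Γ ∧ (W, j) ∈ BAll Γ ∧
    ∃ q o r : ℕ,
      ((ReachSet Γ V (atomE q) ∧ ReachSet Γ V (.lit (.neg q))) ∨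
       (ReachSet Γ V (.ex (.pos q) (.neg r)) ∧ ReachSet Γ V (.al (.pos o) (.pos r)) ∧
         Reach Γ (atomE q) (atomE o)) ∨
       (ReachSet Γ V (.al (.pos q) (.neg r)) ∧ ReachSet Γ V (.ex (.pos o) (.pos r)) ∧
         Reach Γ (atomE o) (atomE q)) ∨
       (ReachSet Γ V (.al (.pos q) (.neg r)) ∧ ReachSet Γ V (.al (.pos o) (.pos r)) ∧
         ReachSet Γ W (atomE q) ∧ ReachSet Γ W (atomE o)))

/-- The set `Γ` of R-formulas used in the proof that `R` admits no sound
and complete direct syllogistic system (indices `0,…,n-1`). -/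
def GammaSet (n : ℕ) (p : ℕ → ℕ) (r : ℕ) : Set Formula :=
  {φ | (∃ i, i + 1 < n ∧ φ = .al (atomE (p i)) (.ex (.pos (p (i + 1))) (.pos r))) ∨
       φ = .al (atomE (p 0)) (.al (.pos (p (n - 1))) (.pos r)) ∨
       (∃ q : ℕ, φ = .al (atomE q) (atomE q)) ∨
       (∃ i j, i < j ∧ j < n ∧ φ = .al (atomE (p i)) (.lit (.neg (p j))))}

/-- `Γ` is R*-complete: for every R*-formula `θ`, `θ ∈ Γ` or `θ̄ ∈ Γ`. -/
def RstarComplete (Γ : Set Formula) : Prop :=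
  ∀ θ ∈ FragRstar, θ ∈ Γ ∨ Formula.bar θ ∈ Γ

/-- Domain of the canonical structure for `Γ`: triples `(c₁,c₂,Q)` of two
positive c-terms and a quantifier (`Bool`, with `true` rendering `∃` and
`false` rendering `∀`) such that `Γ ⊩_{R*} ∃(c₁,c₂)`. -/
abbrev CanonA (Γ : Set Formula) : Type :=
  {x : ETerm × ETerm × Bool //
    x.1.isPosC ∧ x.2.1.isPosC ∧ IDerives RuleSetRstar Γ (.ex x.1 x.2.1)}

/-- The canonical structure constructed from `Γ`. -/
def CanonInterp (Γ : Set Formula) : Interp (CanonA Γ) where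
  up p := {x | IDerives RuleSetRstar Γ (.al x.val.1 (atomE p)) ∨
               IDerives RuleSetRstar Γ (.al x.val.2.1 (atomE p))}
  br r := {ab |
      (∃ c ∈ ({ab.1.val.1, ab.1.val.2.1} : Set ETerm),
       ∃ d ∈ ({ab.2.val.1, ab.2.val.2.1} : Set ETerm),
       ∃ q : ℕ,
         IDerives RuleSetRstar Γ (.al c (.al (.pos q) (.pos r))) ∧
         IDerives RuleSetRstar Γ (.al d (atomE q))) ∨
      (ab.2.val.2.2 = true ∧
       ∃ q : ℕ, ab.2.val.1 = atomE q ∧ ab.2.val.2.1 = atomE q ∧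
       ∃ c ∈ ({ab.1.val.1, ab.1.val.2.1} : Set ETerm),
         IDerives RuleSetRstar Γ (.al c (.ex (.pos q) (.pos r))))}

/-! ### Auxiliary lemmas for Statement 10 -/

lemma Lit.subst_id' (l : Lit) : l.subst ⟨id,id⟩ = l := by cases l <;> rfl
lemma BLit.subst_id' (t : BLit) : t.subst ⟨id,id⟩ = t := by cases t <;> rfl
lemma ETerm.subst_id' (e : ETerm) : e.subst ⟨id,id⟩ = e := by
  cases e <;> simp [ETerm.subst, Lit.subst_id', BLit.subst_id']
lemma Formula.subst_id' (φ : Formula) : φ.subst ⟨id,id⟩ = φ := by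
  cases φ <;> simp [Formula.subst, ETerm.subst_id']

lemma SylRule.inst_id (R : SylRule) : R.inst ⟨id,id⟩ = R := by
  have h : Formula.subst ⟨id,id⟩ = id := funext Formula.subst_id'
  cases R with
  | mk a c => simp [SylRule.inst, h]

lemma Lit.subst_bar' (g : Subst) (l : Lit) : (l.bar).subst g = (l.subst g).bar := by
  cases l <;> rfl
lemma BLit.subst_bar' (g : Subst) (t : BLit) : (t.bar).subst g = (t.subst g).bar := by
  cases t <;> rfl
lemma ETerm.subst_bar' (g : Subst) (e : ETerm) : (e.bar).subst g = (e.subst g).bar := by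
  cases e <;> simp [ETerm.bar, ETerm.subst, Lit.subst_bar', BLit.subst_bar']
lemma Formula.subst_bar' (g : Subst) (φ : Formula) : (φ.bar).subst g = (φ.subst g).bar := by
  cases φ <;> simp [Formula.bar, Formula.subst, ETerm.subst_bar']

lemma inst_two (g : Subst) (f1 f2 c : Formula) :
    (SylRule.mk {f1, f2} c).inst g = ⟨{f1.subst g, f2.subst g}, c.subst g⟩ := by
  simp [SylRule.inst]
lemma inst_one (g : Subst) (f1 c : Formula) :
    (SylRule.mk {f1} c).inst g = ⟨{f1.subst g}, c.subst g⟩ := by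
  simp [SylRule.inst]
lemma inst_zero (g : Subst) (c : Formula) :
    (SylRule.mk ∅ c).inst g = ⟨∅, c.subst g⟩ := by
  simp [SylRule.inst]

lemma ruleEquiv_two {A B C A' B' C' : Formula}
    (h1 : FormEquiv A A') (h2 : FormEquiv B B') (h3 : FormEquiv C C') :
    RuleEquiv ⟨{A, B}, C⟩ ⟨{A', B'}, C'⟩ := by
  refine ⟨?_, ?_, h3⟩ <;> intro ψ hψ <;>
    simp only [Finset.mem_insert, Finset.mem_singleton] at hψ <;>
    rcases hψ with rfl | rfl
  · exact ⟨A', by simp, h1⟩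
  · exact ⟨B', by simp, h2⟩
  · exact ⟨A, by simp, h1⟩
  · exact ⟨B, by simp, h2⟩

lemma ruleEquiv_two' {A B C A' B' C' : Formula}
    (h1 : FormEquiv A B') (h2 : FormEquiv B A') (h3 : FormEquiv C C') :
    RuleEquiv ⟨{A, B}, C⟩ ⟨{A', B'}, C'⟩ := by
  refine ⟨?_, ?_, h3⟩ <;> intro ψ hψ <;>
    simp only [Finset.mem_insert, Finset.mem_singleton] at hψ <;>
    rcases hψ with rfl | rfl
  · exact ⟨B', by simp, h1⟩
  · exact ⟨A', by simp, h2⟩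
  · exact ⟨B, by simp, h2⟩
  · exact ⟨A, by simp, h1⟩

lemma ruleEquiv_one {A C A' C' : Formula}
    (h1 : FormEquiv A A') (h3 : FormEquiv C C') :
    RuleEquiv ⟨{A}, C⟩ ⟨{A'}, C'⟩ := by
  refine ⟨?_, ?_, h3⟩ <;> intro ψ hψ <;>
    simp only [Finset.mem_singleton] at hψ <;> subst hψ
  · exact ⟨A', by simp, h1⟩
  · exact ⟨A, by simp, h1⟩

lemma ruleEquiv_zero {C C' : Formula} (h3 : FormEquiv C C') :
    RuleEquiv ⟨∅, C⟩ ⟨∅, C'⟩ := by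
  refine ⟨?_, ?_, h3⟩ <;> intro ψ hψ <;> simp at hψ

lemma fragS_subset_fragSdag : FragS ⊆ FragSdag := by
  rintro φ (⟨p,l,rfl⟩|⟨p,l,rfl⟩|⟨p,l,rfl⟩|⟨p,l,rfl⟩)
  · exact ⟨.pos p, l, Or.inl rfl⟩
  · exact ⟨l, .pos p, Or.inl rfl⟩
  · exact ⟨.pos p, l, Or.inr rfl⟩
  · exact ⟨l, .neg p, Or.inr rfl⟩

lemma fragSdag_subst (g : Subst) {φ : Formula} (h : φ ∈ FragSdag) :
    φ.subst g ∈ FragSdag := by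
  rcases h with ⟨l, m, rfl | rfl⟩
  · exact ⟨l.subst g, m.subst g, Or.inl rfl⟩
  · exact ⟨l.subst g, m.subst g, Or.inr rfl⟩
/-- any instance of a rule of `S†` all of whose formulas are in
`S` is an instance of a rule of `S`, and conversely any instance of a rule of
`S` is an instance of a rule of `S†` (both modulo the identification). -/
theorem Sdag_S_rule_instances :
    (∀ R ∈ RuleSetSdag, ∀ g : Subst,
        (∀ ψ ∈ (R.inst g).ants, ψ ∈ FragS) → (R.inst g).con ∈ FragS →
        ∃ R' ∈ RuleSetS, ∃ g' : Subst, RuleEquiv (R.inst g) (R'.inst g')) ∧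
    (∀ R ∈ RuleSetS, ∀ g : Subst,
        ∃ R' ∈ RuleSetSdag, ∃ g' : Subst, RuleEquiv (R.inst g) (R'.inst g')) := by
  constructor
  · -- Every instance of an S†-rule whose formulas lie in S is an instance of an S-rule.
    rintro R hR g hants hcon
    rcases hR with ⟨l,m,n,rfl⟩|⟨l,m,n,rfl⟩|⟨l,m,rfl⟩|⟨l,rfl⟩|⟨l,m,rfl⟩|⟨l,rfl⟩|⟨φ,ψ,hφ,hψ,rfl⟩
    · -- (D)
      simp only [inst_two] at hants hcon ⊢
      have hA : (Formula.ex (.lit l) (.lit n)).subst g ∈ FragS := hants _ (by simp)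
      have hB : (Formula.al (.lit l) (.lit m)).subst g ∈ FragS := hants _ (by simp)
      cases l with
      | pos a =>
        cases m with
        | pos b =>
          exact ⟨_, Or.inr (Or.inl ⟨g.u a, g.u b, n.subst g, rfl⟩), ⟨id,id⟩,
            by rw [SylRule.inst_id]
               exact ruleEquiv_two (Or.inl rfl) (Or.inl rfl) (Or.inl rfl)⟩
        | neg b =>
          cases n with
          | pos c =>
            exact ⟨_, Or.inl ⟨g.u c, g.u a, .neg (g.u b), rfl⟩, ⟨id,id⟩,
              by rw [SylRule.inst_id]
                 exact ruleEquiv_two' (Or.inr rfl) (Or.inl rfl) (Or.inr rfl)⟩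
          | neg c =>
            simp [Formula.subst, ETerm.subst, Lit.subst, FragS, atomE] at hcon
      | neg a =>
        cases n with
        | neg c =>
          simp [Formula.subst, ETerm.subst, Lit.subst, FragS, atomE] at hA
        | pos c =>
          cases m with
          | pos b =>
            simp [Formula.subst, ETerm.subst, Lit.subst, FragS, atomE] at hB
          | neg b =>
            exact ⟨_, Or.inr (Or.inr (Or.inl ⟨g.u c, g.u b, .neg (g.u a), rfl⟩)), ⟨id,id⟩,
              by rw [SylRule.inst_id]
                 exact ruleEquiv_two' (Or.inr rfl) (Or.inr rfl) (Or.inr rfl)⟩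
    · -- (B)
      simp only [inst_two] at hants hcon ⊢
      have hA : (Formula.al (.lit l) (.lit m)).subst g ∈ FragS := hants _ (by simp)
      have hB : (Formula.al (.lit m) (.lit n)).subst g ∈ FragS := hants _ (by simp)
      cases m with
      | pos b =>
        cases l with
        | neg a =>
          simp [Formula.subst, ETerm.subst, Lit.subst, FragS, atomE] at hA
        | pos a =>
          exact ⟨_, Or.inr (Or.inr (Or.inr (Or.inl ⟨g.u a, g.u b, n.subst g, rfl⟩))), ⟨id,id⟩,
            by rw [SylRule.inst_id]
               exact ruleEquiv_two (Or.inl rfl) (Or.inl rfl) (Or.inl rfl)⟩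
      | neg b =>
        cases n with
        | pos c =>
          simp [Formula.subst, ETerm.subst, Lit.subst, FragS, atomE] at hB
        | neg c =>
          exact ⟨_, Or.inr (Or.inr (Or.inr (Or.inl ⟨g.u c, g.u b, (l.subst g).bar, rfl⟩))), ⟨id,id⟩,
            by rw [SylRule.inst_id]
               exact ruleEquiv_two' (Or.inr rfl) (Or.inr rfl) (Or.inr rfl)⟩
    · -- (A)
      simp only [inst_one] at hants hcon ⊢
      have hA : (Formula.al (.lit l) (.lit l.bar)).subst g ∈ FragS := hants _ (by simp)
      cases l with
      | pos a =>
        exact ⟨_, Or.inr (Or.inr (Or.inr (Or.inr (Or.inl ⟨g.u a, m.subst g, rfl⟩)))), ⟨id,id⟩,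
          by rw [SylRule.inst_id]
             exact ruleEquiv_one (Or.inl rfl) (Or.inl rfl)⟩
      | neg a =>
        simp [Formula.subst, ETerm.subst, Lit.subst, Lit.bar, FragS, atomE] at hA
    · -- (T)
      simp only [inst_zero] at hants hcon ⊢
      cases l with
      | pos a =>
        exact ⟨_, Or.inr (Or.inr (Or.inr (Or.inr (Or.inr (Or.inl ⟨g.u a, rfl⟩))))), ⟨id,id⟩,
          by rw [SylRule.inst_id]
             exact ruleEquiv_zero (Or.inl rfl)⟩
      | neg a =>
        exact ⟨_, Or.inr (Or.inr (Or.inr (Or.inr (Or.inr (Or.inl ⟨g.u a, rfl⟩))))), ⟨id,id⟩,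
          by rw [SylRule.inst_id]
             exact ruleEquiv_zero (Or.inr rfl)⟩
    · -- (I)
      simp only [inst_one] at hants hcon ⊢
      cases l with
      | pos a =>
        exact ⟨_, Or.inr (Or.inr (Or.inr (Or.inr (Or.inr (Or.inr (Or.inl ⟨g.u a, m.subst g, rfl⟩)))))),
          ⟨id,id⟩, by rw [SylRule.inst_id]
                      exact ruleEquiv_one (Or.inl rfl) (Or.inl rfl)⟩
      | neg a =>
        simp [Formula.subst, ETerm.subst, Lit.subst, FragS, atomE] at hcon
    · -- (N)
      simp only [inst_one] at hants hcon ⊢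
      have hA : (Formula.al (.lit l.bar) (.lit l)).subst g ∈ FragS := hants _ (by simp)
      cases l with
      | pos a =>
        simp [Formula.subst, ETerm.subst, Lit.subst, Lit.bar, FragS, atomE] at hA
      | neg a =>
        simp [Formula.subst, ETerm.subst, Lit.subst, FragS, atomE] at hcon
    · -- (X)
      simp only [inst_two] at hants hcon ⊢
      have hψS : ψ.subst g ∈ FragS := hants _ (by simp)
      refine ⟨⟨{ψ.subst g, (ψ.subst g).bar}, (Formula.subst g φ)⟩,
        Or.inr (Or.inr (Or.inr (Or.inr (Or.inr (Or.inr (Or.inr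
          ⟨φ.subst g, ψ.subst g, hcon, hψS, rfl⟩)))))), ⟨id,id⟩, ?_⟩
      rw [SylRule.inst_id]
      exact ruleEquiv_two (Or.inl rfl) (Or.inl (Formula.subst_bar' g ψ).symm) (Or.inl rfl)
  · -- Every instance of an S-rule is an instance of an S†-rule.
    rintro R hR g
    rcases hR with ⟨p,q,l,rfl⟩|⟨p,q,l,rfl⟩|⟨p,q,l,rfl⟩|⟨p,q,l,rfl⟩|⟨p,l,rfl⟩|⟨p,rfl⟩|⟨p,l,rfl⟩|⟨φ,ψ,hφ,hψ,rfl⟩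
    · -- (D1)
      exact ⟨_, Or.inl ⟨.pos (g.u q), l.subst g, .pos (g.u p), rfl⟩, ⟨id,id⟩,
        by rw [SylRule.inst_id, inst_two]
           exact ruleEquiv_two' (Or.inl rfl) (Or.inr rfl) (Or.inr rfl)⟩
    · -- (D2)
      exact ⟨_, Or.inl ⟨.pos (g.u p), .pos (g.u q), l.subst g, rfl⟩, ⟨id,id⟩,
        by rw [SylRule.inst_id, inst_two]
           exact ruleEquiv_two (Or.inl rfl) (Or.inl rfl) (Or.inl rfl)⟩
    · -- (D3)
      cases l with
      | pos a =>
        exact ⟨_, Or.inl ⟨.pos (g.u a), .neg (g.u q), .pos (g.u p), rfl⟩, ⟨id,id⟩,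
          by rw [SylRule.inst_id, inst_two]
             exact ruleEquiv_two' (Or.inr rfl) (Or.inr rfl) (Or.inr rfl)⟩
      | neg a =>
        exact ⟨_, Or.inl ⟨.neg (g.u a), .neg (g.u q), .pos (g.u p), rfl⟩, ⟨id,id⟩,
          by rw [SylRule.inst_id, inst_two]
             exact ruleEquiv_two' (Or.inr rfl) (Or.inr rfl) (Or.inr rfl)⟩
    · -- (B)
      exact ⟨_, Or.inr (Or.inl ⟨.pos (g.u p), .pos (g.u q), l.subst g, rfl⟩), ⟨id,id⟩,
        by rw [SylRule.inst_id, inst_two]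
           exact ruleEquiv_two (Or.inl rfl) (Or.inl rfl) (Or.inl rfl)⟩
    · -- (A)
      exact ⟨_, Or.inr (Or.inr (Or.inl ⟨.pos (g.u p), l.subst g, rfl⟩)), ⟨id,id⟩,
        by rw [SylRule.inst_id, inst_one]
           exact ruleEquiv_one (Or.inl rfl) (Or.inl rfl)⟩
    · -- (T)
      exact ⟨_, Or.inr (Or.inr (Or.inr (Or.inl ⟨.pos (g.u p), rfl⟩))), ⟨id,id⟩,
        by rw [SylRule.inst_id, inst_zero]
           exact ruleEquiv_zero (Or.inl rfl)⟩
    · -- (I)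
      exact ⟨_, Or.inr (Or.inr (Or.inr (Or.inr (Or.inl ⟨.pos (g.u p), l.subst g, rfl⟩)))), ⟨id,id⟩,
        by rw [SylRule.inst_id, inst_one]
           exact ruleEquiv_one (Or.inl rfl) (Or.inl rfl)⟩
    · -- (X)
      refine ⟨⟨{ψ.subst g, (ψ.subst g).bar}, φ.subst g⟩,
        Or.inr (Or.inr (Or.inr (Or.inr (Or.inr (Or.inr
          ⟨φ.subst g, ψ.subst g, fragSdag_subst g (fragS_subset_fragSdag hφ),
            fragSdag_subst g (fragS_subset_fragSdag hψ), rfl⟩))))), ⟨id,id⟩, ?_⟩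
      rw [SylRule.inst_id, inst_two]
      exact ruleEquiv_two (Or.inl rfl) (Or.inl (Formula.subst_bar' g ψ).symm) (Or.inl rfl)

end Syllogistic
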